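/- arXiv:0712.1300 — 2 statements merged into one kernel-verified Lean document; each statement's English description precedes it below -/
import Mathlib

section
/- There exists a constant C > 0 such that for all δ ∈ (0, 1/2), all t ≥ 1, all r, v ∈ ℝ with |r| ≤ δ/t and |v| ≤ δ, and all s ∈ [0, t] (so that 1 − r·s ≥ 3/4 > 0), the matrix u₊(s)⁻¹ · u₋(r) · g(v) · u₊( s / (e^v·(1 − r·s)) ) lies within distance C·δ of the identity matrix, where distance is measured by the supremum of the absolute values of the entries of the difference of the 2×2 real matrices. (Equivalently: the points x·u₊(s) and y·u₊(α(s)), with y = x·u₋(r)·g(v) and α(s) = s/(e^v(1−rs)), stay within distance C·δ of each other for 0 ≤ s ≤ t.) -/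
open Matrix

noncomputable section

abbrev SL2R := Matrix.SpecialLinearGroup (Fin 2) ℝ

/-- The positive horocycle matrix `u₊(t) = [[1, t], [0, 1]]`. -/
def uplus (t : ℝ) : SL2R :=
  ⟨!![1, t; 0, 1], by simp [Matrix.det_fin_two_of]⟩

/-- The negative horocycle matrix `u₋(t) = [[1, 0], [t, 1]]`. -/
def uminus (t : ℝ) : SL2R :=
  ⟨!![1, 0; t, 1], by simp [Matrix.det_fin_two_of]⟩

/-- The geodesic flow matrix `g(s) = [[exp(s/2), 0], [0, exp(−s/2)]]`. -/
def gmat (s : ℝ) : SL2R :=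
  ⟨!![Real.exp (s / 2), 0; 0, Real.exp (-(s / 2))], by
    simp [Matrix.det_fin_two_of, ← Real.exp_add]⟩

/-! With `a = exp (v / 2)` and `ρ = 1 - r s`, the time change `s ↦ s / (a² ρ)` is exactly the one
that kills the upper right entry of `u₊(s)⁻¹ u₋(r) g(v) u₊(β)`, which otherwise grows linearly in
`s`; what is left is the lower triangular matrix `[[a ρ, 0], [r a, (a ρ)⁻¹]]`. Since `a` and `ρ`
are within `δ` of `1` (here `|r s| ≤ |r| t ≤ δ` is where `s ≤ t` enters) and `|r| ≤ δ`, all four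
entries are `O(δ)`-close to those of the identity. -/

open Real

theorem coe_uplus (t : ℝ) : ((uplus t : SL2R) : Matrix (Fin 2) (Fin 2) ℝ) = !![1, t; 0, 1] := rfl

theorem coe_uminus (t : ℝ) : ((uminus t : SL2R) : Matrix (Fin 2) (Fin 2) ℝ) = !![1, 0; t, 1] := rfl

theorem coe_gmat (s : ℝ) : ((gmat s : SL2R) : Matrix (Fin 2) (Fin 2) ℝ) =
    !![exp (s / 2), 0; 0, exp (-(s / 2))] := rfl

theorem coe_uplus_inv (s : ℝ) :
    (((uplus s)⁻¹ : SL2R) : Matrix (Fin 2) (Fin 2) ℝ) = !![1, -s; 0, 1] := by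
  rw [Matrix.SpecialLinearGroup.coe_inv, coe_uplus, Matrix.adjugate_fin_two_of, neg_zero]

theorem coe_uplus_inv_mul_uminus_mul_gmat_mul_uplus {r s v : ℝ} (h : 1 - r * s ≠ 0) :
    (((uplus s)⁻¹ * uminus r * gmat v * uplus (s / (exp v * (1 - r * s))) : SL2R) :
      Matrix (Fin 2) (Fin 2) ℝ) =
      !![exp (v / 2) * (1 - r * s), 0; r * exp (v / 2), (exp (v / 2) * (1 - r * s))⁻¹] := by
  have ha : exp (v / 2) ≠ 0 := (exp_pos _).ne'
  have hv : exp v = exp (v / 2) * exp (v / 2) := by rw [← exp_add, add_halves]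
  simp only [Matrix.SpecialLinearGroup.coe_mul, coe_uplus_inv, coe_uminus, coe_gmat, coe_uplus,
    Matrix.mul_fin_two, hv, exp_neg]
  congr 1
  simp only [Matrix.vecCons_inj, and_true]
  refine ⟨⟨?_, ?_⟩, ?_, ?_⟩ <;> grind

theorem abs_inv_sub_one_le_of_le {x c : ℝ} (hc : 0 < c) (hcx : c ≤ x) :
    |x⁻¹ - 1| ≤ |x - 1| / c := by
  have hx : 0 < x := hc.trans_le hcx
  rw [show x⁻¹ - 1 = (1 - x) / x by field_simp, abs_div, abs_sub_comm, abs_of_pos hx]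
  exact div_le_div_of_nonneg_left (abs_nonneg _) hc hcx

theorem abs_mul_sub_one_le {x y ε : ℝ} (hx : |x - 1| ≤ ε) (hy : |y - 1| ≤ ε) (hε : ε ≤ 1) :
    |x * y - 1| ≤ 3 * ε := by
  have hε0 : 0 ≤ ε := (abs_nonneg _).trans hx
  calc |x * y - 1| = |(x - 1) * (y - 1) + (x - 1) + (y - 1)| := by ring_nf
    _ ≤ |x - 1| * |y - 1| + |x - 1| + |y - 1| := by
      rw [← abs_mul]; exact abs_add_three _ _ _
    _ ≤ ε * ε + ε + ε := by gcongr
    _ ≤ 3 * ε := by nlinarith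

theorem sq_one_sub_le_mul {x y ε : ℝ} (hx : |x - 1| ≤ ε) (hy : |y - 1| ≤ ε) (hε : ε ≤ 1) :
    (1 - ε) ^ 2 ≤ x * y := by
  rw [abs_le] at hx hy
  rw [sq]
  exact mul_le_mul (by linarith) (by linarith) (by linarith) (by linarith)

theorem abs_exp_half_sub_one_le {v : ℝ} (hv : |v| ≤ 2) : |exp (v / 2) - 1| ≤ |v| := by
  have h := Real.abs_exp_sub_one_le (x := v / 2) (by rw [abs_div, abs_two]; linarith)
  rwa [abs_div, abs_two, mul_div_cancel₀ _ two_ne_zero] at h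

theorem abs_mul_le_of_abs_le_div {r s t δ : ℝ} (ht : 0 < t) (hr : |r| ≤ δ / t) (hs : |s| ≤ t) :
    |r * s| ≤ δ := by
  rw [abs_mul]
  calc |r| * |s| ≤ δ / t * t := mul_le_mul hr hs (abs_nonneg _) ((abs_nonneg _).trans hr)
    _ = δ := div_mul_cancel₀ _ ht.ne'

/-- Horocycle shadowing lemma: there is a constant `C > 0` such that for all `0 < δ < 1/2`,
`t ≥ 1`, `|r| ≤ δ/t`, `|v| ≤ δ` and `0 ≤ s ≤ t`, the matrix
`u₊(s)⁻¹·u₋(r)·g(v)·u₊(s/(eᵛ(1 − rs)))` is within distance `C·δ` of the identity,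
where distance is the supremum of the absolute values of the entries of the difference. -/
theorem horocycles_stay_close :
    ∃ C : ℝ, 0 < C ∧ ∀ δ t r v s : ℝ, 0 < δ → δ < 1 / 2 → 1 ≤ t →
      |r| ≤ δ / t → |v| ≤ δ → 0 ≤ s → s ≤ t →
      ∀ i j : Fin 2,
        |(((uplus s)⁻¹ * uminus r * gmat v *
            uplus (s / (Real.exp v * (1 - r * s))) : SL2R) :
              Matrix (Fin 2) (Fin 2) ℝ) i j - (1 : Matrix (Fin 2) (Fin 2) ℝ) i j| ≤ C * δ := by
  refine ⟨12, by norm_num, fun δ t r v s hδ hδ2 ht hr hv hs hst => ?_⟩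
  have ha : |exp (v / 2) - 1| ≤ δ := (abs_exp_half_sub_one_le (by linarith)).trans hv
  have hρ : |(1 - r * s) - 1| ≤ δ := by
    rw [sub_sub_cancel_left, abs_neg]
    exact abs_mul_le_of_abs_le_div (by linarith) hr (by rwa [abs_of_nonneg hs])
  have hprod := abs_mul_sub_one_le ha hρ (by linarith)
  have hprod_ge : 1 / 4 ≤ exp (v / 2) * (1 - r * s) :=
    le_trans (by nlinarith) (sq_one_sub_le_mul ha hρ (by linarith))
  have hra : |r * exp (v / 2)| ≤ 2 * δ := by
    have hexp : |exp (v / 2)| ≤ 2 := by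
      rw [abs_of_pos (exp_pos _)]; linarith [abs_le.mp ha]
    rw [abs_mul, mul_comm 2]
    exact mul_le_mul (hr.trans (div_le_self hδ.le ht)) hexp (abs_nonneg _) hδ.le
  have hinv : |(exp (v / 2) * (1 - r * s))⁻¹ - 1| ≤ 12 * δ := by
    calc _ ≤ |exp (v / 2) * (1 - r * s) - 1| / (1 / 4) :=
          abs_inv_sub_one_le_of_le (by norm_num) hprod_ge
      _ ≤ 12 * δ := by linarith
  rw [coe_uplus_inv_mul_uminus_mul_gmat_mul_uplus (by linarith [abs_le.mp hρ])]
  intro i j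
  fin_cases i <;> fin_cases j
  · simpa using hprod.trans (by linarith)
  · simpa using (by positivity : (0 : ℝ) ≤ 12 * δ)
  · simpa using hra.trans (by linarith)
  · simpa using hinv
end
end

section
/- The set P of points of X that are periodic for the horocycle flow has measure zero: μ(P) = 0. -/
/-!
The geodesic flow `a_s = diag(e^{s/2}, e^{-s/2})` normalises the horocycle flow,
`a_s u₊(t) a_s⁻¹ = u₊(e^s t)`, so the `μ`-preserving right translation by `a_s` carries the set
`P_T` of points with a period in `(0, T]` onto `P_{e^{-s} T}`: the measure of `P_T` does not depend
on `T > 0`. As `Γ` is discrete, no point has arbitrarily small periods, so `P_T` decreases to `∅`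
as `T → 0` and, `μ` being finite, `μ(P_T) → 0`. Hence every `P_T` is null, and so is
`P = ⋃ₙ P_n`.
-/

open MeasureTheory Filter Matrix

noncomputable section

instance : TopologicalSpace SL2R :=
  inferInstanceAs (TopologicalSpace {A : Matrix (Fin 2) (Fin 2) ℝ // A.det = 1})

instance : MeasurableSpace SL2R := borel SL2R

/-- The quotient `Γ \ G` of `G = SL(2,ℝ)` by left multiplication by `Γ`,
i.e. the space of right cosets `Γg`. -/
abbrev XΓ (Γ : Subgroup SL2R) := Quotient (QuotientGroup.rightRel Γ)

def rmul {Γ : Subgroup SL2R} (x : XΓ Γ) (A : SL2R) : XΓ Γ :=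
  Quotient.map' (· * A)
    (fun a b h => by
      rw [QuotientGroup.rightRel_apply] at h ⊢
      simpa [_root_.mul_inv_rev, mul_assoc] using h) x

open Set Topology Real

instance : IsTopologicalGroup SL2R := Matrix.SpecialLinearGroup.topologicalGroup

instance : T2Space SL2R := inferInstanceAs (T2Space {A : Matrix (Fin 2) (Fin 2) ℝ // A.det = 1})

instance : SecondCountableTopology SL2R :=
  have : SecondCountableTopology (Matrix (Fin 2) (Fin 2) ℝ) :=
    inferInstanceAs (SecondCountableTopology (Fin 2 → Fin 2 → ℝ))
  Matrix.SpecialLinearGroup.isClosedEmbedding_val.isEmbedding.secondCountableTopology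

instance : BorelSpace SL2R := ⟨rfl⟩

@[fun_prop]
lemma continuous_uplus : Continuous uplus := by
  refine continuous_induced_rng.2 (continuous_matrix fun i j => ?_)
  fin_cases i <;> fin_cases j <;> simp <;> fun_prop

lemma isClosedEmbedding_uplus : IsClosedEmbedding uplus :=
  Function.LeftInverse.isClosedEmbedding (f := fun g : SL2R => (g : Matrix (Fin 2) (Fin 2) ℝ) 0 1)
    (fun _ => rfl) (by fun_prop) continuous_uplus

lemma uplus_zero : uplus 0 = 1 :=
  Subtype.ext (by simp [uplus, Matrix.one_fin_two])

def geodesicFlow (s : ℝ) : SL2R :=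
  ⟨!![exp (s / 2), 0; 0, exp (-(s / 2))], by simp [Matrix.det_fin_two_of, ← Real.exp_add]⟩

lemma geodesicFlow_mul_uplus (s t : ℝ) :
    geodesicFlow s * uplus t = uplus (exp s * t) * geodesicFlow s := by
  have h : exp s * exp (-(s / 2)) = exp (s / 2) := by rw [← Real.exp_add]; ring_nf
  apply Subtype.ext
  change !![_, _; _, _] * !![_, _; _, _] = !![_, _; _, _] * !![_, _; _, _]
  simp only [Matrix.mul_fin_two]
  rw [← h]
  ring_nf

section rmul

variable {Γ : Subgroup SL2R}

lemma rmul_mk (g A : SL2R) : rmul (Quotient.mk'' g : XΓ Γ) A = Quotient.mk'' (g * A) := rfl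

lemma rmul_rmul (x : XΓ Γ) (A B : SL2R) : rmul (rmul x A) B = rmul x (A * B) := by
  induction x using Quotient.inductionOn' with
  | h g => simp only [rmul_mk, mul_assoc]

lemma rmul_one (x : XΓ Γ) : rmul x 1 = x := by
  induction x using Quotient.inductionOn' with
  | h g => simp only [rmul_mk, mul_one]

lemma rmul_left_injective (A : SL2R) : Function.Injective fun x : XΓ Γ => rmul x A :=
  fun x y h => by simpa [rmul_rmul, rmul_one] using congrArg (rmul · A⁻¹) h

lemma measurable_rmul (A : SL2R) : Measurable fun x : XΓ Γ => rmul x A :=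
  measurable_from_quotient.2 <|
    measurable_quotient_mk''.comp (continuous_mul_const A).measurable

lemma rmul_mk_eq_self_iff (g A : SL2R) :
    rmul (Quotient.mk'' g : XΓ Γ) A = Quotient.mk'' g ↔ g * A * g⁻¹ ∈ Γ := by
  rw [rmul_mk, Quotient.eq'', QuotientGroup.rightRel_apply,
    show g * (g * A)⁻¹ = (g * A * g⁻¹)⁻¹ by group, inv_mem_iff]

end rmul

def periodicUpTo (Γ : Subgroup SL2R) (T : ℝ) : Set (XΓ Γ) :=
  {x | ∃ t ∈ Ioc 0 T, rmul x (uplus t) = x}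

namespace periodicUpTo

variable (Γ : Subgroup SL2R)

lemma mono : Monotone (periodicUpTo Γ) :=
  fun _ _ hTT' _ ⟨t, ht, hx⟩ => ⟨t, ⟨ht.1, ht.2.trans hTT'⟩, hx⟩

lemma preimage_mk (T : ℝ) :
    Quotient.mk'' ⁻¹' periodicUpTo Γ T =
      ⋃ γ : Γ, (fun g => g⁻¹ * (γ : SL2R) * g) ⁻¹' (uplus '' Ioc 0 T) := by
  ext g
  simp only [periodicUpTo, mem_preimage, mem_ofPred_eq, rmul_mk_eq_self_iff, mem_iUnion,
    mem_image]
  constructor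
  · rintro ⟨t, ht, hγ⟩
    exact ⟨⟨_, hγ⟩, t, ht, by group⟩
  · rintro ⟨γ, t, ht, hγ⟩
    refine ⟨t, ht, ?_⟩
    rw [hγ, show g * (g⁻¹ * (γ : SL2R) * g) * g⁻¹ = γ by group]
    exact γ.2

lemma measurableSet [DiscreteTopology Γ] (T : ℝ) : MeasurableSet (periodicUpTo Γ T) := by
  have : Countable Γ := TopologicalSpace.separableSpace_iff_countable.1 inferInstance
  rw [measurableSet_quotient, preimage_mk]
  exact MeasurableSet.iUnion fun γ =>
    (by fun_prop : Continuous fun g => g⁻¹ * (γ : SL2R) * g).measurable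
      (isClosedEmbedding_uplus.measurableEmbedding.measurableSet_image.2 measurableSet_Ioc)

lemma preimage_rmul_geodesicFlow (s T : ℝ) :
    (fun x => rmul x (geodesicFlow s)) ⁻¹' periodicUpTo Γ (exp (-s) * T) = periodicUpTo Γ T := by
  have hperiod : ∀ (x : XΓ Γ) t,
      rmul (rmul x (geodesicFlow s)) (uplus t) = rmul x (geodesicFlow s) ↔
        rmul x (uplus (exp s * t)) = x := fun x t => by
    rw [rmul_rmul, geodesicFlow_mul_uplus, ← rmul_rmul]
    exact (rmul_left_injective _).eq_iff
  ext x
  simp only [periodicUpTo, mem_preimage, mem_ofPred_eq, hperiod, mem_Ioc]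
  constructor
  · rintro ⟨t, ⟨ht0, htT⟩, hx⟩
    refine ⟨exp s * t, ⟨by positivity, ?_⟩, hx⟩
    rwa [Real.exp_neg, le_inv_mul_iff₀ (exp_pos s)] at htT
  · rintro ⟨t, ⟨ht0, htT⟩, hx⟩
    refine ⟨exp (-s) * t, ⟨by positivity, by gcongr⟩, ?_⟩
    rwa [← mul_assoc, ← Real.exp_add, add_neg_cancel, exp_zero, one_mul]

end periodicUpTo

section

variable {Γ : Subgroup SL2R} [DiscreteTopology Γ]

lemma exists_pos_notMem_periodicUpTo (x : XΓ Γ) : ∃ T > 0, x ∉ periodicUpTo Γ T := by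
  induction x using Quotient.inductionOn' with
  | h g =>
  have hΓ : ∀ᶠ y in 𝓝 (1 : SL2R), y ∈ Γ → y = 1 :=
    eventually_nhdsWithin_iff.1 <| by
      rw [(DiscreteTopology.isDiscrete (s := (Γ : Set SL2R))).nhdsWithin 1 Γ.one_mem]
      exact eventually_pure.2 rfl
  have hconj : Tendsto (fun t => g * uplus t * g⁻¹) (𝓝 0) (𝓝 1) :=
    (by fun_prop : Continuous fun t => g * uplus t * g⁻¹).tendsto' 0 1 (by simp [uplus_zero])
  obtain ⟨ε, hε, hsmall⟩ := Metric.eventually_nhds_iff.1 (hconj.eventually hΓ)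
  refine ⟨ε / 2, half_pos hε, ?_⟩
  rintro ⟨t, ⟨ht0, htε⟩, hper⟩
  have hdist : dist t 0 < ε := by rw [Real.dist_0_eq_abs, abs_of_pos ht0]; linarith
  have h1 : uplus t = uplus 0 := by
    rw [uplus_zero]
    simpa using hsmall hdist ((rmul_mk_eq_self_iff g _).1 hper)
  exact ht0.ne' (isClosedEmbedding_uplus.injective h1)

lemma biInter_periodicUpTo_eq_empty : ⋂ T > 0, periodicUpTo Γ T = ∅ :=
  eq_empty_of_forall_notMem fun x hx =>
    let ⟨T, hT, hxT⟩ := exists_pos_notMem_periodicUpTo x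
    hxT (mem_iInter₂.1 hx T hT)

variable {μ : Measure (XΓ Γ)}

lemma measure_periodicUpTo_exp_neg_mul (hμ : ∀ B : SL2R, μ.map (fun x => rmul x B) = μ)
    (s T : ℝ) : μ (periodicUpTo Γ (exp (-s) * T)) = μ (periodicUpTo Γ T) := by
  rw [← periodicUpTo.preimage_rmul_geodesicFlow Γ s T]
  exact (MeasurePreserving.measure_preimage ⟨measurable_rmul _, hμ _⟩
    (periodicUpTo.measurableSet Γ _).nullMeasurableSet).symm

lemma measure_periodicUpTo_eq_zero [IsFiniteMeasure μ]
    (hμ : ∀ B : SL2R, μ.map (fun x => rmul x B) = μ) {T : ℝ} (hT : 0 < T) :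
    μ (periodicUpTo Γ T) = 0 := by
  have hsmall : Tendsto (μ ∘ periodicUpTo Γ) (𝓝[>] 0) (𝓝 0) := by
    simpa [biInter_periodicUpTo_eq_empty] using tendsto_measure_biInter_gt (μ := μ)
      (fun r _ => (periodicUpTo.measurableSet Γ r).nullMeasurableSet)
      (fun _ _ _ hij => periodicUpTo.mono Γ hij) ⟨1, one_pos, measure_ne_top μ _⟩
  have hshrink : Tendsto (fun s : ℝ => exp (-s) * T) atTop (𝓝[>] 0) :=
    tendsto_nhdsWithin_iff.2
      ⟨by simpa using Real.tendsto_exp_neg_atTop_nhds_zero.mul_const T,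
        Eventually.of_forall fun s => mem_Ioi.2 (by positivity)⟩
  have hconst := hsmall.comp hshrink
  simp only [Function.comp_def, measure_periodicUpTo_exp_neg_mul hμ] at hconst
  exact tendsto_nhds_unique tendsto_const_nhds hconst

end

/-- The set `P` of points of `X = Γ \ G` that are periodic for the horocycle flow has
measure zero. -/
theorem periodic_points_measure_zero
    (Γ : Subgroup SL2R) [DiscreteTopology Γ]
    (μ : Measure (XΓ Γ)) [IsProbabilityMeasure μ]
    (hμ : ∀ B : SL2R, Measure.map (fun x => rmul x B) μ = μ) :
    μ {x : XΓ Γ | ∃ t : ℝ, 0 < t ∧ rmul x (uplus t) = x} = 0 := by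
  refine measure_mono_null (t := ⋃ n : ℕ, periodicUpTo Γ (n + 1)) ?_
    (measure_iUnion_null fun n => measure_periodicUpTo_eq_zero hμ n.cast_add_one_pos)
  rintro x ⟨t, ht0, hx⟩
  obtain ⟨n, hn⟩ := exists_nat_ge t
  exact mem_iUnion.2 ⟨n, t, ⟨ht0, hn.trans (lt_add_one _).le⟩, hx⟩
end
end
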